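/- arXiv:2202.04828 — 4 statements merged into one kernel-verified Lean document; each statement's English description precedes it below -/
import Mathlib

section
/- Let n ≥ 1. Let h : ℝⁿ → ℝⁿ be three times continuously differentiable with Jacobian Dh(ẑ) invertible at every point ẑ, and for k = 1,…,n let η_k : ℝ × ℝⁿ → ℝ be three times continuously differentiable. Define F : ℝⁿ × ℝⁿ → ℝ by F(ẑ, w) = Σ_{k=1}^n η_k((h(ẑ))_k, w) + log |det Dh(ẑ)|. Assume ∂²F/∂ẑ_i ∂ẑ_j (ẑ, w) = 0 for all i ≠ j and all (ẑ, w) ∈ ℝⁿ × ℝⁿ. Assume moreover that for every z ∈ ℝⁿ the 2n vector-valued functions of w ∈ ℝⁿ, namely v_k(z_k, ·) : ℝⁿ → ℝⁿ with l-th component ∂²η_k/∂z∂w_l (z_k, w) and v̊_k(z_k, ·) : ℝⁿ → ℝⁿ with l-th component ∂³η_k/∂z²∂w_l (z_k, w), for k = 1,…,n, are linearly independent. Then for every ẑ ∈ ℝⁿ, every k, and all i ≠ j, (Dh(ẑ))_{ki} · (Dh(ẑ))_{kj} = 0; that is, each row of Dh(ẑ) has exactly one nonzero entry. -/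
/-!
Differentiating `F` in `ẑ_i` and then in `ẑ_j` gives, for `i ≠ j` and `J = Dh`,
`0 = Σ_k (∂_j J_{ki} · ∂_z η_k + J_{ki} J_{kj} · ∂_z² η_k)((h ẑ)_k, w) + ∂_j ∂_i log |det J|(ẑ)`.
The last term does not depend on `w`, so differentiating in `w_l` leaves a vanishing linear
combination of the functions `v_k(z_k, ·)` and `v̊_k(z_k, ·)` with coefficients `∂_j J_{ki}` and
`J_{ki} J_{kj}`; by linear independence, `J_{ki} J_{kj} = 0`.
-/

open scoped BigOperators

noncomputable def pd {n : ℕ} (f : (Fin n → ℝ) → ℝ) (l : Fin n) (x : Fin n → ℝ) : ℝ :=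
  fderiv ℝ f x (Pi.single l 1)

open Finset

section PartialDerivatives

variable {n : ℕ} {f g : (Fin n → ℝ) → ℝ} {x : Fin n → ℝ} (l : Fin n)

theorem pd_const (c : ℝ) : pd (fun _ => c) l x = 0 := by
  simp [pd]

theorem pd_add (hf : DifferentiableAt ℝ f x) (hg : DifferentiableAt ℝ g x) :
    pd (fun y => f y + g y) l x = pd f l x + pd g l x := by
  simp [pd, fderiv_fun_add hf hg]

theorem pd_mul (hf : DifferentiableAt ℝ f x) (hg : DifferentiableAt ℝ g x) :
    pd (fun y => f y * g y) l x = pd f l x * g x + f x * pd g l x := by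
  simp only [pd, fderiv_fun_mul hf hg, add_apply, smul_apply, smul_eq_mul]
  ring

theorem pd_const_mul (hf : DifferentiableAt ℝ f x) (c : ℝ) :
    pd (fun y => c * f y) l x = c * pd f l x := by
  simp [pd, fderiv_const_mul hf]

theorem pd_sum {ι : Type*} {s : Finset ι} {F : ι → (Fin n → ℝ) → ℝ}
    (hF : ∀ k ∈ s, DifferentiableAt ℝ (F k) x) :
    pd (fun y => ∑ k ∈ s, F k y) l x = ∑ k ∈ s, pd (F k) l x := by
  simp [pd, fderiv_fun_sum hF]

theorem pd_comp {φ : ℝ → ℝ} (hφ : DifferentiableAt ℝ φ (f x)) (hf : DifferentiableAt ℝ f x) :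
    pd (fun y => φ (f y)) l x = deriv φ (f x) * pd f l x := by
  have hcomp : HasFDerivAt (fun y => φ (f y)) (deriv φ (f x) • fderiv ℝ f x) x :=
    hφ.hasDerivAt.comp_hasFDerivAt x hf.hasFDerivAt
  simp [pd, hcomp.fderiv]

theorem pd_apply {ι : Type*} [Fintype ι] {h : (Fin n → ℝ) → ι → ℝ}
    (hh : DifferentiableAt ℝ h x) (k : ι) :
    pd (fun y => h y k) l x = fderiv ℝ h x (Pi.single l 1) k := by
  simp [pd, fderiv_apply hh]

theorem ContDiff.pd {m k : WithTop ℕ∞} (hf : ContDiff ℝ m f) (hkm : k + 1 ≤ m) :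
    ContDiff ℝ k (pd f l) :=
  (hf.fderiv_right hkm).clm_apply contDiff_const

end PartialDerivatives

theorem ContDiff.deriv_fst {E : Type*} [NormedAddCommGroup E] [NormedSpace ℝ E]
    {f : ℝ → E → ℝ} {m k : WithTop ℕ∞}
    (hf : ContDiff ℝ m (fun p : ℝ × E => f p.1 p.2)) (hkm : k + 1 ≤ m) :
    ContDiff ℝ k (fun p : ℝ × E => deriv (fun z => f z p.2) p.1) :=
  ContDiff.fderiv_apply (f := fun (p : ℝ × E) (z : ℝ) => f z p.2)
    (hf.comp (contDiff_snd.prodMk (contDiff_snd.comp contDiff_fst)))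
    contDiff_fst contDiff_const hkm

theorem ContDiff.deriv_deriv_fst {E : Type*} [NormedAddCommGroup E] [NormedSpace ℝ E]
    {f : ℝ → E → ℝ} {m k : WithTop ℕ∞}
    (hf : ContDiff ℝ m (fun p : ℝ × E => f p.1 p.2)) (hkm : k + 2 ≤ m) :
    ContDiff ℝ k (fun p : ℝ × E => deriv (deriv (fun z => f z p.2)) p.1) :=
  (hf.deriv_fst (k := k + 1) (by rwa [add_assoc, one_add_one_eq_two])).deriv_fst
    (f := fun z w => deriv (fun z' => f z' w) z) le_rfl

theorem ContDiff.matrix_det {𝕜 E ι : Type*} [NontriviallyNormedField 𝕜]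
    [NormedAddCommGroup E] [NormedSpace 𝕜 E] [Fintype ι] [DecidableEq ι] {m : WithTop ℕ∞}
    {M : E → Matrix ι ι 𝕜} (hM : ∀ i j, ContDiff 𝕜 m (fun x => M x i j)) :
    ContDiff 𝕜 m (fun x => (M x).det) := by
  simp_rw [Matrix.det_apply']
  exact ContDiff.sum fun σ _ => contDiff_const.mul (contDiff_prod fun i _ => hM _ _)

theorem ContDiff.log_abs_det {E ι : Type*} [NormedAddCommGroup E] [NormedSpace ℝ E] [Fintype ι]
    [DecidableEq ι] {m : WithTop ℕ∞} {M : E → Matrix ι ι ℝ}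
    (hM : ∀ i j, ContDiff ℝ m (fun x => M x i j)) (hunit : ∀ x, IsUnit (M x)) :
    ContDiff ℝ m (fun x => Real.log |(M x).det|) := by
  simp_rw [Real.log_abs]
  exact (ContDiff.matrix_det hM).log fun x => ((hunit x).map Matrix.detMonoidHom).ne_zero

theorem LinearIndependent.eq_zero_of_sum_smul_true_add_smul_false {ι R M : Type*} [Fintype ι]
    [Ring R] [AddCommGroup M] [Module R M] {u : ι × Bool → M} (hu : LinearIndependent R u)
    {a b : ι → R} (h : ∑ k, (a k • u (k, true) + b k • u (k, false)) = 0) (k : ι) :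
    a k = 0 ∧ b k = 0 := by
  have := Fintype.linearIndependent_iff.mp hu (fun kb => bif kb.2 then a kb.1 else b kb.1)
    (by simpa [Fintype.sum_prod_type, add_comm] using h)
  exact ⟨this (k, true), this (k, false)⟩

theorem pd_pd_sum_comp_add {n : ℕ} {ι : Type*} [Fintype ι] {h : (Fin n → ℝ) → ι → ℝ}
    {φ : ι → ℝ → ℝ} {L : (Fin n → ℝ) → ℝ} (hh : ContDiff ℝ 2 h) (hφ : ∀ k, ContDiff ℝ 2 (φ k))
    (hL : ContDiff ℝ 2 L) (i j : Fin n) (x : Fin n → ℝ) :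
    pd (fun y => pd (fun x => ∑ k, φ k (h x k) + L x) i y) j x =
      ∑ k, (pd (pd (fun y => h y k) i) j x * deriv (φ k) (h x k)
        + pd (fun y => h y k) i x * pd (fun y => h y k) j x * deriv (deriv (φ k)) (h x k))
        + pd (pd L i) j x := by
  have hhk : ∀ k, ContDiff ℝ 2 (fun y => h y k) := contDiff_pi.mp hh
  have hhd : ∀ k, Differentiable ℝ (fun y => h y k) := fun k => (hhk k).differentiable two_ne_zero
  have hφd : ∀ k, Differentiable ℝ (φ k) := fun k => (hφ k).differentiable two_ne_zero
  have hφ'd : ∀ k, Differentiable ℝ (deriv (φ k)) := fun k => (hφ k).differentiable_deriv_two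
  have hpdd : ∀ {f : (Fin n → ℝ) → ℝ}, ContDiff ℝ 2 f → Differentiable ℝ (pd f i) :=
    fun hf => (hf.pd i (by norm_num : (1 : WithTop ℕ∞) + 1 ≤ 2)).differentiable one_ne_zero
  have hcomp : ∀ {ψ : ℝ → ℝ}, Differentiable ℝ ψ → ∀ k, Differentiable ℝ (fun y => ψ (h y k)) :=
    fun hψ k => hψ.comp (hhd k)
  have hterm : ∀ k, Differentiable ℝ (fun y => deriv (φ k) (h y k) * pd (fun y => h y k) i y) :=
    fun k => (hcomp (hφ'd k) k).mul (hpdd (hhk k))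
  have hfirst : ∀ y, pd (fun x => ∑ k, φ k (h x k) + L x) i y =
      ∑ k, deriv (φ k) (h y k) * pd (fun y => h y k) i y + pd L i y := by
    intro y
    rw [pd_add _ (Differentiable.fun_sum (fun k _ => hcomp (hφd k) k) y)
      (hL.differentiable two_ne_zero y), pd_sum _ fun k _ => hcomp (hφd k) k y]
    exact congrArg (· + _) (sum_congr rfl fun k _ => pd_comp _ (hφd k _) (hhd k y))
  simp_rw [hfirst]
  rw [pd_add _ (Differentiable.fun_sum (fun k _ => hterm k) x) (hpdd hL x),
    pd_sum _ fun k _ => hterm k x]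
  refine congrArg (· + _) (sum_congr rfl fun k _ => ?_)
  rw [pd_mul _ (hcomp (hφ'd k) k x) (hpdd (hhk k) x), pd_comp _ (hφ'd k _) (hhd k x)]
  ring

theorem sum_mul_pd_add_mul_pd_eq_zero {n : ℕ} {ι : Type*} [Fintype ι]
    {f g : ι → (Fin n → ℝ) → ℝ} {a b : ι → ℝ} {c : ℝ}
    (hf : ∀ k, Differentiable ℝ (f k)) (hg : ∀ k, Differentiable ℝ (g k))
    (hsum : ∀ w, ∑ k, (a k * f k w + b k * g k w) + c = 0) (l : Fin n) (w : Fin n → ℝ) :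
    ∑ k, (a k * pd (f k) l w + b k * pd (g k) l w) = 0 := by
  have hconst : (fun w => ∑ k, (a k * f k w + b k * g k w)) = fun _ => -c :=
    funext fun w => eq_neg_of_add_eq_zero_left (hsum w)
  have hpd_zero := congrArg (pd · l w) hconst
  simp only [pd_const] at hpd_zero
  have hterm : ∀ k, DifferentiableAt ℝ (fun w => a k * f k w + b k * g k w) w :=
    fun k => (((hf k).const_mul (a k)).add ((hg k).const_mul (b k))) w
  rw [← hpd_zero, pd_sum _ fun k _ => hterm k]
  refine sum_congr rfl fun k _ => ?_
  rw [pd_add _ ((hf k).const_mul (a k) w) ((hg k).const_mul (b k) w),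
    pd_const_mul _ (hf k w), pd_const_mul _ (hg k w)]

theorem stmt0_general (n : ℕ)
    (h : (Fin n → ℝ) → (Fin n → ℝ)) (hsmooth : ContDiff ℝ 3 h)
    -- the Jacobian matrix of `h`
    (J : (Fin n → ℝ) → Matrix (Fin n) (Fin n) ℝ)
    (hJ : ∀ zh k i, J zh k i = fderiv ℝ h zh (Pi.single i 1) k)
    (hJinv : ∀ zh, IsUnit (J zh))
    -- the component log conditional densities η_k(z, w)
    (η : Fin n → ℝ → (Fin n → ℝ) → ℝ)
    (hη : ∀ k, ContDiff ℝ 3 (fun p : ℝ × (Fin n → ℝ) => η k p.1 p.2))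
    -- F(ẑ, w) = Σ_k η_k((h ẑ)_k, w) + log |det Dh(ẑ)|
    (F : (Fin n → ℝ) → (Fin n → ℝ) → ℝ)
    (hF : ∀ zh w, F zh w = (∑ k, η k (h zh k) w) + Real.log |(J zh).det|)
    -- vanishing of the cross second-order partials of F in ẑ
    (hcross : ∀ (i j : Fin n), i ≠ j → ∀ (zh w : Fin n → ℝ),
      pd (fun y => pd (fun x => F x w) i y) j zh = 0)
    -- v_k(z, w)_l = ∂²η_k/∂z∂w_l (z, w)
    (v : Fin n → ℝ → (Fin n → ℝ) → (Fin n → ℝ))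
    (hv : ∀ k z w l, v k z w l = pd (fun w' => deriv (fun z' => η k z' w') z) l w)
    -- v̊_k(z, w)_l = ∂³η_k/∂z²∂w_l (z, w)
    (vr : Fin n → ℝ → (Fin n → ℝ) → (Fin n → ℝ))
    (hvr : ∀ k z w l, vr k z w l = pd (fun w' => deriv (deriv (fun z' => η k z' w')) z) l w)
    -- for each value of z, the 2n vector functions v_k(z_k, ·), v̊_k(z_k, ·) of w
    -- are linearly independent
    (hli : ∀ z : Fin n → ℝ, LinearIndependent ℝ
      (fun kb : Fin n × Bool => fun w : Fin n → ℝ =>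
        if kb.2 then v kb.1 (z kb.1) w else vr kb.1 (z kb.1) w)) :
    ∀ (zh : Fin n → ℝ) (k i j : Fin n), i ≠ j → J zh k i * J zh k j = 0 := by
  intro zh k₀ i j hij
  have hh : ContDiff ℝ 2 h := hsmooth.of_le (by norm_num)
  have hJpd : ∀ y k i, J y k i = pd (fun x => h x k) i y := fun y k i => by
    rw [hJ, pd_apply _ (hh.differentiable two_ne_zero y)]
  have hlogdet : ContDiff ℝ 2 (fun y => Real.log |(J y).det|) :=
    ContDiff.log_abs_det (fun k i => by
      simpa only [hJpd] using (contDiff_pi.mp hsmooth k).pd i (by norm_num)) hJinv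
  have hηz : ∀ k w, ContDiff ℝ 2 (fun z => η k z w) := fun k w =>
    ((hη k).comp (contDiff_prodMk_left w)).of_le (by norm_num)
  have hd1 : ∀ k z, Differentiable ℝ (fun w => deriv (fun z' => η k z' w) z) := fun k z =>
    (((hη k).deriv_fst (k := 2) (by norm_num)).comp (contDiff_prodMk_right z)).differentiable
      two_ne_zero
  have hd2 : ∀ k z, Differentiable ℝ (fun w => deriv (deriv (fun z' => η k z' w)) z) := fun k z =>
    (((hη k).deriv_deriv_fst (k := 1) (by norm_num)).comp (contDiff_prodMk_right z)).differentiable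
      one_ne_zero
  have hmixed : ∀ w, ∑ k, (pd (pd (fun y => h y k) i) j zh * deriv (fun z => η k z w) (h zh k)
      + J zh k i * J zh k j * deriv (deriv (fun z => η k z w)) (h zh k))
      + pd (pd (fun y => Real.log |(J y).det|) i) j zh = 0 := by
    intro w
    have := hcross i j hij zh w
    simp only [hF] at this
    rw [pd_pd_sum_comp_add hh (fun k => hηz k w) hlogdet] at this
    simpa only [hJpd] using this
  have hmixed_w := sum_mul_pd_add_mul_pd_eq_zero (fun k => hd1 k _) (fun k => hd2 k _) hmixed
  refine (LinearIndependent.eq_zero_of_sum_smul_true_add_smul_false (hli (h zh))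
    (a := fun k => pd (pd (fun y => h y k) i) j zh) (b := fun k => J zh k i * J zh k j) ?_ k₀).2
  funext w l
  simpa [hv, hvr, Finset.sum_apply] using hmixed_w l w

/-- Analytic core of Theorem 1 (identifiability under a fixed temporal causal model). -/
theorem stmt0 (n : ℕ) (hn : 1 ≤ n)
    (h : (Fin n → ℝ) → (Fin n → ℝ)) (hsmooth : ContDiff ℝ 3 h)
    -- the Jacobian matrix of `h`
    (J : (Fin n → ℝ) → Matrix (Fin n) (Fin n) ℝ)
    (hJ : ∀ zh k i, J zh k i = fderiv ℝ h zh (Pi.single i 1) k)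
    (hJinv : ∀ zh, IsUnit (J zh))
    -- the component log conditional densities η_k(z, w)
    (η : Fin n → ℝ → (Fin n → ℝ) → ℝ)
    (hη : ∀ k, ContDiff ℝ 3 (fun p : ℝ × (Fin n → ℝ) => η k p.1 p.2))
    -- F(ẑ, w) = Σ_k η_k((h ẑ)_k, w) + log |det Dh(ẑ)|
    (F : (Fin n → ℝ) → (Fin n → ℝ) → ℝ)
    (hF : ∀ zh w, F zh w = (∑ k, η k (h zh k) w) + Real.log |(J zh).det|)
    -- vanishing of the cross second-order partials of F in ẑ
    (hcross : ∀ (i j : Fin n), i ≠ j → ∀ (zh w : Fin n → ℝ),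
      pd (fun y => pd (fun x => F x w) i y) j zh = 0)
    -- v_k(z, w)_l = ∂²η_k/∂z∂w_l (z, w)
    (v : Fin n → ℝ → (Fin n → ℝ) → (Fin n → ℝ))
    (hv : ∀ k z w l, v k z w l = pd (fun w' => deriv (fun z' => η k z' w') z) l w)
    -- v̊_k(z, w)_l = ∂³η_k/∂z²∂w_l (z, w)
    (vr : Fin n → ℝ → (Fin n → ℝ) → (Fin n → ℝ))
    (hvr : ∀ k z w l, vr k z w l = pd (fun w' => deriv (deriv (fun z' => η k z' w')) z) l w)
    -- for each value of z, the 2n vector functions v_k(z_k, ·), v̊_k(z_k, ·) of w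
    -- are linearly independent
    (hli : ∀ z : Fin n → ℝ, LinearIndependent ℝ
      (fun kb : Fin n × Bool => fun w : Fin n → ℝ =>
        if kb.2 then v kb.1 (z kb.1) w else vr kb.1 (z kb.1) w)) :
    ∀ (zh : Fin n → ℝ) (k i j : Fin n), i ≠ j → J zh k i * J zh k j = 0 :=
  stmt0_general n h hsmooth J hJ hJinv η hη F hF hcross v hv vr hvr hli
end

section
/- Let n ≥ 1 and let (Ω, 𝒜, P) be a probability space with (Ω, 𝒜) a standard Borel space. Let E : Ω → ℝⁿ be a random vector whose coordinates E_1,…,E_n are mutually independent, with E_k Gaussian with mean 0 and variance σ_k² where σ_k > 0. Let Z : Ω → ℝⁿ be a measurable random vector independent of E, and let q : ℝⁿ → ℝⁿ be measurable. Let D_1 = diag(d_1,…,d_n) with all d_k ≠ 0, let U be an n×n real orthogonal matrix, and let D_2 = diag(σ_1⁻¹,…,σ_n⁻¹). Define the random vector Ẑ = D_1 U D_2 (q(Z) + E). Then the coordinates Ẑ_1,…,Ẑ_n are mutually conditionally independent given the σ-algebra generated by Z. -/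
/-!
Write `Ẑ = A (q(Z) + E)` with `A = D₁ U D₂`. The noise part `A E` has a product law: `D₂` whitens
`E` to a standard Gaussian vector, whose law is invariant under the orthogonal `U`, and `D₁` only
rescales coordinates. Since `A E` is independent of `Z`, it can be frozen: given `Z`, the event
`{(Z, A E) ∈ T}` has conditional probability `law(A E){y | (Z, y) ∈ T}`, and for the events
`⋂ₖ {Ẑₖ ∈ Bₖ}` this slice is a box, whose product measure factors over the coordinates.
-/

open MeasureTheory ProbabilityTheory Matrix

section Gaussian

variable {ι : Type*} [Fintype ι] [DecidableEq ι]

lemma map_mulVec_pi_gaussianReal_of_transpose_mul_self {U : Matrix ι ι ℝ} (hU : Uᵀ * U = 1) :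
    (Measure.pi fun _ : ι => gaussianReal 0 1).map U.mulVec
      = Measure.pi fun _ : ι => gaussianReal 0 1 := by
  have hUnitary : toEuclideanCLM (𝕜 := ℝ) U ∈ unitary _ :=
    Unitary.map_mem toEuclideanCLM (mem_unitaryGroup_iff'.2 hU)
  let e := Unitary.linearIsometryEquiv ⟨_, hUnitary⟩
  have hU_eq : U.mulVec = WithLp.ofLp ∘ e ∘ WithLp.toLp 2 := by
    ext x : 1
    exact (ofLp_toEuclideanCLM U (WithLp.toLp 2 x)).symm
  have h_ofLp : (stdGaussian (EuclideanSpace ℝ ι)).map WithLp.ofLp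
      = Measure.pi fun _ : ι => gaussianReal 0 1 := by
    rw [← map_pi_eq_stdGaussian, Measure.map_map (by fun_prop) (by fun_prop)]
    exact Measure.map_id
  rw [hU_eq, ← Measure.map_map (by fun_prop) (by fun_prop),
    ← Measure.map_map (by fun_prop) (by fun_prop), map_pi_eq_stdGaussian, stdGaussian_map, h_ofLp]

lemma map_mulVec_diagonal_pi (c : ι → ℝ) (μ : ι → Measure ℝ) [∀ i, IsFiniteMeasure (μ i)] :
    (Measure.pi μ).map (diagonal c).mulVec = Measure.pi fun i => (μ i).map (c i * ·) := by
  have h : (diagonal c).mulVec = fun x i => c i * x i := by ext; exact mulVec_diagonal ..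
  rw [h]
  exact Measure.pi_map_pi fun i => (measurable_const_mul (c i)).aemeasurable

lemma map_mulVec_diagonal_inv_pi_gaussianReal {σ : ι → NNReal} (hσ : ∀ i, σ i ≠ 0) :
    (Measure.pi fun i => gaussianReal 0 (σ i ^ 2)).map (diagonal fun i => (σ i : ℝ)⁻¹).mulVec
      = Measure.pi fun _ : ι => gaussianReal 0 1 := by
  rw [map_mulVec_diagonal_pi]
  congr with i : 1
  rw [gaussianReal_map_const_mul, mul_zero]
  congr
  ext
  simp [hσ i]

lemma map_mulVec_eq_pi_of_iIndepFun_gaussianReal {Ω : Type*} [MeasurableSpace Ω] {P : Measure Ω}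
    [IsProbabilityMeasure P] {E : Ω → ι → ℝ} (hE : Measurable E)
    (hEindep : iIndepFun (fun k ω => E ω k) P) {σ : ι → NNReal} (hσ : ∀ k, σ k ≠ 0)
    (hEgauss : ∀ k, P.map (fun ω => E ω k) = gaussianReal 0 (σ k ^ 2)) (d : ι → ℝ)
    {U : Matrix ι ι ℝ} (hU : Uᵀ * U = 1) :
    P.map (fun ω => (diagonal d * U * diagonal fun k => (σ k : ℝ)⁻¹) *ᵥ E ω)
      = Measure.pi fun k => (gaussianReal 0 1).map (d k * ·) := by
  have hlawE : P.map E = Measure.pi fun k => gaussianReal 0 (σ k ^ 2) := by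
    rw [← funext hEgauss]
    exact hEindep.map_fun_eq_pi_map fun k => hE.eval.aemeasurable
  have h_factor : (fun ω => (diagonal d * U * diagonal fun k => (σ k : ℝ)⁻¹) *ᵥ E ω)
      = (diagonal d).mulVec ∘ U.mulVec ∘ (diagonal fun k => (σ k : ℝ)⁻¹).mulVec ∘ E := by
    ext1 ω
    simp only [Function.comp_apply, mulVec_mulVec, Matrix.mul_assoc]
  rw [h_factor, ← Measure.map_map (by fun_prop) (by fun_prop),
    ← Measure.map_map (by fun_prop) (by fun_prop), ← Measure.map_map (by fun_prop) hE, hlawE,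
    map_mulVec_diagonal_inv_pi_gaussianReal hσ, map_mulVec_pi_gaussianReal_of_transpose_mul_self hU,
    map_mulVec_diagonal_pi]

end Gaussian

section Freezing

variable {Ω β γ : Type*} [MeasurableSpace Ω] [mβ : MeasurableSpace β] [MeasurableSpace γ]
  [StandardBorelSpace γ] [Nonempty γ] {P : Measure Ω} [IsProbabilityMeasure P]
  {Z : Ω → β} {Y : Ω → γ}

lemma condExp_preimage_prodMk_ae_eq_of_indepFun (hZ : Measurable Z) (hY : Measurable Y)
    (hZY : IndepFun Z Y P) {T : Set (β × γ)} (hT : MeasurableSet T) :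
    P⟦(fun ω => (Z ω, Y ω)) ⁻¹' T | mβ.comap Z⟧
      =ᵐ[P] fun ω => (P.map Y).real (Prod.mk (Z ω) ⁻¹' T) := by
  have h_condDistrib : condDistrib Y Z P =ᵐ[P.map Z] Kernel.const β (P.map Y) := by
    refine condDistrib_ae_eq_of_measure_eq_compProd Z hY.aemeasurable ?_
    rw [Measure.compProd_const]
    exact (indepFun_iff_map_prod_eq_prod_map_map hZ.aemeasurable hY.aemeasurable).1 hZY
  have h_condExp : P⟦(fun ω => (Z ω, Y ω)) ⁻¹' T | mβ.comap Z⟧ =ᵐ[P]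
      fun ω => ∫ y, (Prod.mk (Z ω) ⁻¹' T).indicator 1 y ∂condDistrib Y Z P (Z ω) :=
    condExp_prod_ae_eq_integral_condDistrib hZ hY.aemeasurable
      ((stronglyMeasurable_const (b := (1 : ℝ))).indicator hT)
      ((integrable_const (1 : ℝ)).indicator ((hZ.prodMk hY) hT))
  filter_upwards [h_condExp, ae_of_ae_map hZ.aemeasurable h_condDistrib] with ω hω hω'
  rw [hω, hω', Kernel.const_apply]
  exact integral_indicator_one (measurable_prodMk_left hT)

end Freezing

section CondIndep

variable {Ω β ι : Type*} [MeasurableSpace Ω] [mβ : MeasurableSpace β] [Fintype ι]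
  {γ δ : ι → Type*} [∀ i, MeasurableSpace (γ i)] [∀ i, StandardBorelSpace (γ i)]
  [∀ i, Nonempty (γ i)] [∀ i, MeasurableSpace (δ i)]
  {P : Measure Ω} [IsProbabilityMeasure P] {Z : Ω → β} {Y : Ω → Π i, γ i}
  {μ : ∀ i, Measure (γ i)} [∀ i, IsProbabilityMeasure (μ i)]
  {g : ∀ i, β → γ i → δ i}

lemma condExp_iInter_preimage_ae_eq_prod_of_map_eq_pi (hZ : Measurable Z) (hY : Measurable Y)
    (hZY : IndepFun Z Y P) (hlaw : P.map Y = Measure.pi μ)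
    (hg : ∀ i, Measurable (Function.uncurry (g i))) (S : Finset ι) {B : ∀ i, Set (δ i)}
    (hB : ∀ i ∈ S, MeasurableSet (B i)) :
    P⟦⋂ i ∈ S, (fun ω => g i (Z ω) (Y ω i)) ⁻¹' B i | mβ.comap Z⟧
      =ᵐ[P] fun ω => ∏ i ∈ S, (μ i).real (g i (Z ω) ⁻¹' B i) := by
  set T : Set (β × Π i, γ i) := ⋂ i ∈ S, (fun p => g i p.1 (p.2 i)) ⁻¹' B i
  have hT : MeasurableSet T := Finset.measurableSet_biInter S fun i hi =>
    (hg i).comp (measurable_fst.prodMk (measurable_pi_apply i |>.comp measurable_snd)) (hB i hi)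
  have h_preimage : ⋂ i ∈ S, (fun ω => g i (Z ω) (Y ω i)) ⁻¹' B i
      = (fun ω => (Z ω, Y ω)) ⁻¹' T := by
    ext; simp [T]
  rw [h_preimage]
  filter_upwards [condExp_preimage_prodMk_ae_eq_of_indepFun hZ hY hZY hT] with ω hω
  have h_slice : Prod.mk (Z ω) ⁻¹' T = (S : Set ι).pi fun i => g i (Z ω) ⁻¹' B i := by
    ext; simp [T]
  rw [hω, hlaw, h_slice, measureReal_def, Measure.pi_pi_finset, ENNReal.toReal_prod]
  rfl

theorem iCondIndepFun_comap_of_indepFun_of_map_eq_pi [StandardBorelSpace Ω] (hZ : Measurable Z)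
    (hY : Measurable Y) (hZY : IndepFun Z Y P) (hlaw : P.map Y = Measure.pi μ)
    (hg : ∀ i, Measurable (Function.uncurry (g i))) :
    iCondIndepFun (mβ.comap Z) hZ.comap_le (fun i ω => g i (Z ω) (Y ω i)) P := by
  have hf : ∀ i, Measurable fun ω => g i (Z ω) (Y ω i) := fun i =>
    (hg i).comp (hZ.prodMk ((measurable_pi_apply i).comp hY))
  rw [iCondIndepFun_iff_condExp_inter_preimage_eq_mul _ _ hf]
  intro S B hB
  have h_single : ∀ i ∈ S, P⟦(fun ω => g i (Z ω) (Y ω i)) ⁻¹' B i | mβ.comap Z⟧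
      =ᵐ[P] fun ω => (μ i).real (g i (Z ω) ⁻¹' B i) := fun i hi => by
    simpa using condExp_iInter_preimage_ae_eq_prod_of_map_eq_pi hZ hY hZY hlaw hg {i}
      (B := B) (by simpa using hB i hi)
  filter_upwards [condExp_iInter_preimage_ae_eq_prod_of_map_eq_pi hZ hY hZY hlaw hg S hB,
    (ae_ball_iff S.countable_toSet).2 h_single] with ω hω h_factors
  rw [hω, Finset.prod_apply]
  exact Finset.prod_congr rfl fun i hi => (h_factors i hi).symm

end CondIndep

theorem stmt1_general {Ω : Type*} [MeasurableSpace Ω] [StandardBorelSpace Ω]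
    (P : Measure Ω) [IsProbabilityMeasure P]
    (n : ℕ)
    (E : Ω → (Fin n → ℝ)) (hE : Measurable E)
    (hEindep : iIndepFun
      (fun k ω => E ω k) P)
    (σ : Fin n → NNReal) (hσ : ∀ k, 0 < σ k)
    (hEgauss : ∀ k, P.map (fun ω => E ω k) = gaussianReal 0 ((σ k) ^ 2))
    (Z : Ω → (Fin n → ℝ)) (hZ : Measurable Z)
    (hZE : IndepFun Z E P)
    (q : (Fin n → ℝ) → (Fin n → ℝ)) (hq : Measurable q)
    (d : Fin n → ℝ)
    (U : Matrix (Fin n) (Fin n) ℝ) (hU : Uᵀ * U = 1) :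
    iCondIndepFun (MeasurableSpace.comap Z inferInstance) hZ.comap_le
      (fun k ω => ((Matrix.diagonal d * U * Matrix.diagonal (fun k => ((σ k : ℝ))⁻¹)).mulVec
        (q (Z ω) + E ω)) k) P := by
  set A := Matrix.diagonal d * U * Matrix.diagonal (fun k => ((σ k : ℝ))⁻¹)
  have h_indep : IndepFun Z (fun ω => A *ᵥ E ω) P :=
    hZE.comp measurable_id (show Measurable A.mulVec by fun_prop)
  have : ∀ k, IsProbabilityMeasure ((gaussianReal 0 1).map (d k * ·)) := fun k =>
    Measure.isProbabilityMeasure_map (by fun_prop)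
  simp_rw [mulVec_add]
  exact iCondIndepFun_comap_of_indepFun_of_map_eq_pi hZ (by fun_prop) h_indep
    (map_mulVec_eq_pi_of_iIndepFun_gaussianReal hE hEindep (fun k => (hσ k).ne') hEgauss d hU)
    (g := fun k z t => (A *ᵥ q z) k + t) fun k => by fun_prop

/-- Proposition 1 (unidentifiability under Gaussian noise): for the latent process
`Ẑ = D₁ U D₂ (q(Z) + E)` with `E` an independent-coordinate Gaussian noise vector independent of
`Z`, `D₁ = diag d` nonsingular diagonal, `U` orthogonal and `D₂ = diag (σ k)⁻¹`, the coordinates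
of `Ẑ` are mutually conditionally independent given the σ-algebra generated by `Z`. -/
theorem stmt1 {Ω : Type*} [MeasurableSpace Ω] [StandardBorelSpace Ω]
    (P : Measure Ω) [IsProbabilityMeasure P]
    (n : ℕ) (hn : 1 ≤ n)
    (E : Ω → (Fin n → ℝ)) (hE : Measurable E)
    (hEindep : iIndepFun
      (fun k ω => E ω k) P)
    (σ : Fin n → NNReal) (hσ : ∀ k, 0 < σ k)
    (hEgauss : ∀ k, P.map (fun ω => E ω k) = gaussianReal 0 ((σ k) ^ 2))
    (Z : Ω → (Fin n → ℝ)) (hZ : Measurable Z)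
    (hZE : IndepFun Z E P)
    (q : (Fin n → ℝ) → (Fin n → ℝ)) (hq : Measurable q)
    (d : Fin n → ℝ) (hd : ∀ k, d k ≠ 0)
    (U : Matrix (Fin n) (Fin n) ℝ) (hU : Uᵀ * U = 1) :
    iCondIndepFun (MeasurableSpace.comap Z inferInstance) hZ.comap_le
      (fun k ω => ((Matrix.diagonal d * U * Matrix.diagonal (fun k => ((σ k : ℝ))⁻¹)).mulVec
        (q (Z ω) + E ω)) k) P :=
  stmt1_general P n E hE hEindep σ hσ hEgauss Z hZ hZE q hq d U hU
end

section
/- Let (Ω, 𝒜, P) be a probability space with (Ω, 𝒜) a standard Borel space, let 𝔪 ⊆ 𝒜 be a sub-σ-algebra, let n ≥ 2, and let X_1,…,X_n : Ω → ℝ be measurable random variables that are mutually conditionally independent given 𝔪. Then for any indices i ≠ j, the random variables X_i and X_j are conditionally independent given the σ-algebra generated by 𝔪 together with the random variables X_k for all k ∉ {i, j}. -/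
/-!
Split the family into the pair `(X i, X j)` and the remaining coordinates `Y`. Mutual conditional
independence makes `σ(X i, X j)` and `σ(Y)` conditionally independent given `𝔪`, so for every
event `A ∈ σ(X i, X j)` adding `Y` to the conditioning does not change `P(A | ·)`; this is checked
on the π-system of sets `M ∩ C` with `M ∈ 𝔪`, `C ∈ σ(Y)`. Applied to `A`, `B` and `A ∩ B`, it
turns the factorisation `P(A ∩ B | 𝔪) = P(A | 𝔪) P(B | 𝔪)` into the factorisation given `𝔪 ∨ σ(Y)`.
-/

open MeasureTheory ProbabilityTheory MeasurableSpace

theorem isPiSystem_image2_inter {α : Type*} {C D : Set (Set α)} (hC : IsPiSystem C)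
    (hD : IsPiSystem D) : IsPiSystem (Set.image2 (· ∩ ·) C D) := by
  rintro _ ⟨s₁, hs₁, t₁, ht₁, rfl⟩ _ ⟨s₂, hs₂, t₂, ht₂, rfl⟩ hne
  have hst : s₁ ∩ t₁ ∩ (s₂ ∩ t₂) = s₁ ∩ s₂ ∩ (t₁ ∩ t₂) := Set.inter_inter_inter_comm _ _ _ _
  rw [hst] at hne ⊢
  exact Set.mem_image2_of_mem (hC _ hs₁ _ hs₂ (hne.mono Set.inter_subset_left))
    (hD _ ht₁ _ ht₂ (hne.mono Set.inter_subset_right))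

theorem generateFrom_image2_inter_measurableSet {α : Type*} (m₁ m₂ : MeasurableSpace α) :
    generateFrom (Set.image2 (· ∩ ·) {s | MeasurableSet[m₁] s} {t | MeasurableSet[m₂] t}) =
      m₁ ⊔ m₂ := by
  refine le_antisymm (generateFrom_le ?_) (sup_le (fun s hs => ?_) fun t ht => ?_)
  · rintro _ ⟨s, hs, t, ht, rfl⟩
    exact (le_sup_left (b := m₂) s hs).inter (le_sup_right (a := m₁) t ht)
  · exact measurableSet_generateFrom ⟨s, hs, Set.univ, .univ, Set.inter_univ s⟩
  · exact measurableSet_generateFrom ⟨Set.univ, .univ, t, ht, Set.univ_inter t⟩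

namespace MeasureTheory

theorem setIntegral_eq_of_isPiSystem_of_univ_mem {α E : Type*} [NormedAddCommGroup E]
    [NormedSpace ℝ E] {m m₀ : MeasurableSpace α} {μ : Measure α} {f g : α → E} (hm : m ≤ m₀)
    {s : Set (Set α)} (h_eq : m = generateFrom s) (h_inter : IsPiSystem s)
    (h_univ : Set.univ ∈ s) (hf : Integrable f μ) (hg : Integrable g μ)
    (basic : ∀ t ∈ s, ∫ x in t, f x ∂μ = ∫ x in t, g x ∂μ) :
    ∀ t, MeasurableSet[m] t → ∫ x in t, f x ∂μ = ∫ x in t, g x ∂μ := by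
  have h_total : ∫ x, f x ∂μ = ∫ x, g x ∂μ := by
    simpa only [Measure.restrict_univ] using basic _ h_univ
  refine induction_on_inter h_eq h_inter (by simp) basic (fun t ht h => ?_) fun t hd ht h => ?_
  · rw [setIntegral_compl (hm t ht) hf, setIntegral_compl (hm t ht) hg, h_total, h]
  · rw [integral_iUnion (fun i => hm _ (ht i)) hd hf.integrableOn,
      integral_iUnion (fun i => hm _ (ht i)) hd hg.integrableOn]
    exact tsum_congr h

end MeasureTheory

namespace ProbabilityTheory

variable {Ω : Type*} {m' m₁ m₂ m₃ mΩ : MeasurableSpace Ω} [StandardBorelSpace Ω]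
  {hm' : m' ≤ mΩ} {μ : Measure Ω} [IsFiniteMeasure μ]

theorem CondIndep.condExp_indicator_sup_ae_eq (h : CondIndep m' m₁ m₂ hm' μ)
    (hm₁ : m₁ ≤ mΩ) (hm₂ : m₂ ≤ mΩ) {s : Set Ω} (hs : MeasurableSet[m₁] s) :
    μ⟦s | m' ⊔ m₂⟧ =ᵐ[μ] μ⟦s | m'⟧ := by
  have hsΩ : MeasurableSet[mΩ] s := hm₁ s hs
  have h_ind : Integrable (s.indicator fun _ => (1 : ℝ)) μ := (integrable_const 1).indicator hsΩ
  refine (ae_eq_condExp_of_forall_setIntegral_eq (sup_le hm' hm₂) h_ind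
    (fun _ _ _ => integrable_condExp.integrableOn) (fun t ht _ => ?_)
    (stronglyMeasurable_condExp.mono (le_sup_left : m' ≤ m' ⊔ m₂)).aestronglyMeasurable).symm
  refine setIntegral_eq_of_isPiSystem_of_univ_mem (sup_le hm' hm₂)
    (generateFrom_image2_inter_measurableSet m' m₂).symm
    (isPiSystem_image2_inter (@isPiSystem_measurableSet Ω m') (@isPiSystem_measurableSet Ω m₂))
    ⟨Set.univ, .univ, Set.univ, .univ, Set.inter_univ _⟩ integrable_condExp h_ind ?_ t ht
  rintro _ ⟨M, hM, C, hC, rfl⟩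
  have hCΩ : MeasurableSet[mΩ] C := hm₂ C hC
  have h_prod : μ⟦s ∩ C | m'⟧ =ᵐ[μ] μ⟦s | m'⟧ * μ⟦C | m'⟧ :=
    (condIndep_iff m' m₁ m₂ hm' hm₁ hm₂ μ).mp h s C hs hC
  have h_pull : μ[C.indicator (μ⟦s | m'⟧) | m'] =ᵐ[μ] μ⟦s | m'⟧ * μ⟦C | m'⟧ := by
    have h_mul : C.indicator (μ⟦s | m'⟧) = μ⟦s | m'⟧ * C.indicator fun _ => (1 : ℝ) := by
      ext ω; by_cases hω : ω ∈ C <;> simp [hω]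
    rw [h_mul]
    refine condExp_mul_of_stronglyMeasurable_left stronglyMeasurable_condExp ?_
      ((integrable_const 1).indicator hCΩ)
    rw [← h_mul]
    exact integrable_condExp.indicator hCΩ
  calc ∫ ω in M ∩ C, (μ⟦s | m'⟧) ω ∂μ
      = ∫ ω in M, C.indicator (μ⟦s | m'⟧) ω ∂μ := (setIntegral_indicator hCΩ).symm
    _ = ∫ ω in M, (μ[C.indicator (μ⟦s | m'⟧) | m']) ω ∂μ :=
        (setIntegral_condExp hm' (integrable_condExp.indicator hCΩ) hM).symm
    _ = ∫ ω in M, (μ⟦s ∩ C | m'⟧) ω ∂μ :=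
        setIntegral_congr_ae (hm' M hM) <| by
          filter_upwards [h_pull, h_prod] with ω h_pull h_prod _
          rw [h_pull, h_prod]
    _ = ∫ ω in M, (s ∩ C).indicator (fun _ => (1 : ℝ)) ω ∂μ :=
        setIntegral_condExp hm' ((integrable_const 1).indicator (hsΩ.inter hCΩ)) hM
    _ = ∫ ω in M ∩ C, s.indicator (fun _ => (1 : ℝ)) ω ∂μ := by
        rw [Set.inter_comm s C, ← Set.indicator_indicator, setIntegral_indicator hCΩ]

theorem CondIndep.condIndep_sup_condition (h₁₂ : CondIndep m' m₁ m₂ hm' μ)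
    (h : CondIndep m' (m₁ ⊔ m₂) m₃ hm' μ) (hm₁ : m₁ ≤ mΩ) (hm₂ : m₂ ≤ mΩ) (hm₃ : m₃ ≤ mΩ) :
    CondIndep (m' ⊔ m₃) m₁ m₂ (sup_le hm' hm₃) μ := by
  rw [condIndep_iff _ _ _ _ hm₁ hm₂]
  intro t₁ t₂ ht₁ ht₂
  have hsup : ∀ {t}, MeasurableSet[m₁ ⊔ m₂] t → μ⟦t | m' ⊔ m₃⟧ =ᵐ[μ] μ⟦t | m'⟧ :=
    h.condExp_indicator_sup_ae_eq (sup_le hm₁ hm₂) hm₃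
  have ht₁' : MeasurableSet[m₁ ⊔ m₂] t₁ := le_sup_left (b := m₂) t₁ ht₁
  have ht₂' : MeasurableSet[m₁ ⊔ m₂] t₂ := le_sup_right (a := m₁) t₂ ht₂
  filter_upwards [hsup (ht₁'.inter ht₂'), hsup ht₁', hsup ht₂',
    (condIndep_iff _ _ _ _ hm₁ hm₂ μ).mp h₁₂ t₁ t₂ ht₁ ht₂] with ω h_inter h_left h_right h_prod
  simp only [Pi.mul_apply] at h_prod ⊢
  rw [h_inter, h_left, h_right, h_prod]

end ProbabilityTheory

theorem stmt10_general {Ω : Type*} [mΩ : MeasurableSpace Ω] [StandardBorelSpace Ω]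
    (P : Measure Ω) [IsProbabilityMeasure P]
    (m' : MeasurableSpace Ω) (hm' : m' ≤ mΩ)
    (n : ℕ)
    (X : Fin n → Ω → ℝ) (hX : ∀ k, Measurable[mΩ] (X k))
    (hindep : iCondIndepFun m' hm' (m := fun _ : Fin n => (inferInstance : MeasurableSpace ℝ)) X P)
    (i j : Fin n) (hij : i ≠ j) :
    CondIndepFun
      (m' ⊔ ⨆ k ∈ ({i, j} : Set (Fin n))ᶜ, MeasurableSpace.comap (X k) inferInstance)
      (sup_le hm' (iSup₂_le fun k _ => (hX k).comap_le))
      (X i) (X j) P := by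
  set σX : Fin n → MeasurableSpace Ω := fun k => MeasurableSpace.comap (X k) inferInstance
  have h_le : ∀ k, σX k ≤ mΩ := fun k => (hX k).comap_le
  have h_pair : CondIndep m' (σX i) (σX j) hm' P := hindep.condIndepFun hij
  have h_rest : CondIndep m' (σX i ⊔ σX j) (⨆ k ∈ ({i, j} : Set (Fin n))ᶜ, σX k) hm' P :=
    condIndep_of_condIndep_of_le_left
      (condIndep_iSup_of_disjoint h_le hindep disjoint_compl_right)
      (sup_le (le_iSup₂ (f := fun k (_ : k ∈ ({i, j} : Set (Fin n))) => σX k) i (by simp))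
        (le_iSup₂ (f := fun k (_ : k ∈ ({i, j} : Set (Fin n))) => σX k) j (by simp)))
  exact h_pair.condIndep_sup_condition h_rest (h_le i) (h_le j) (iSup₂_le fun k _ => h_le k)

/-- First step in the proof of Theorem 1: mutual conditional independence of `X_1, …, X_n` given
a sub-σ-algebra `𝔪` implies that any two of them, `X_i` and `X_j` with `i ≠ j`, are conditionally
independent given the σ-algebra generated by `𝔪` together with all the remaining `X_k`. -/
theorem stmt10 {Ω : Type*} [mΩ : MeasurableSpace Ω] [StandardBorelSpace Ω]
    (P : Measure Ω) [IsProbabilityMeasure P]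
    (m' : MeasurableSpace Ω) (hm' : m' ≤ mΩ)
    (n : ℕ) (hn : 2 ≤ n)
    (X : Fin n → Ω → ℝ) (hX : ∀ k, Measurable[mΩ] (X k))
    (hindep : iCondIndepFun m' hm' (m := fun _ : Fin n => (inferInstance : MeasurableSpace ℝ)) X P)
    (i j : Fin n) (hij : i ≠ j) :
    CondIndepFun
      (m' ⊔ ⨆ k ∈ ({i, j} : Set (Fin n))ᶜ, MeasurableSpace.comap (X k) inferInstance)
      (sup_le hm' (iSup₂_le fun k _ => (hX k).comap_le))
      (X i) (X j) P :=
  stmt10_general (mΩ := mΩ) P m' hm' n X hX hindep i j hij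
end

section
/- Let n ≥ 1 and let h : ℝⁿ → ℝⁿ be continuously differentiable such that at every point ẑ the Jacobian Dh(ẑ) is invertible and each of its rows has at most one nonzero entry (i.e., (Dh(ẑ))_{ki}·(Dh(ẑ))_{kj} = 0 for all k and all i ≠ j). Then there exist a permutation σ of {1,…,n} and continuously differentiable functions h_1,…,h_n : ℝ → ℝ, each with nowhere-vanishing derivative, such that h(ẑ)_k = h_k(ẑ_{σ(k)}) for all ẑ ∈ ℝⁿ and all k = 1,…,n. In particular, h is a permuted componentwise transformation with each component map injective. -/
/-!
Each entry of the Jacobian is continuous, so the set where a given entry of row `k` is nonzero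
is open; it is also closed, because its complement is covered by the open sets where one of the
other entries of the row is nonzero (invertibility forbids a zero row, and the row condition
forbids two nonzero entries). By connectedness of `ℝⁿ` the nonzero entry of each row therefore
sits in a fixed column `σ k`, and `σ` is a permutation because no column of an invertible matrix
vanishes. Then `h _ k` has zero partial derivatives off the coordinate `σ k`, so it is a function
of that coordinate alone, whose derivative is the nowhere-vanishing entry `J _ k (σ k)`; Rolle's
theorem makes it injective.
-/

open Function

theorem apply_ne_zero_of_pairwise_mul_eq_zero {X ι M₀ : Type*} [TopologicalSpace X]
    [PreconnectedSpace X] [MulZeroClass M₀] [NoZeroDivisors M₀] [TopologicalSpace M₀]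
    [T1Space M₀] {f : ι → X → M₀} (hf : ∀ i, Continuous (f i))
    (hex : ∀ x, ∃ i, f i x ≠ 0) (hmul : ∀ x i j, i ≠ j → f i x * f j x = 0)
    {i : ι} {x₀ : X} (hx₀ : f i x₀ ≠ 0) (x : X) : f i x ≠ 0 := by
  have hopen : ∀ j, IsOpen {x | f j x ≠ 0} := fun j => isOpen_compl_singleton.preimage (hf j)
  have hcompl : {x | f i x ≠ 0}ᶜ = ⋃ j ∈ {j | j ≠ i}, {x | f j x ≠ 0} := by
    ext y
    simp only [Set.mem_compl_iff, Set.mem_ofPred_eq, not_not, Set.mem_iUnion, exists_prop]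
    constructor
    · intro hy
      obtain ⟨j, hj⟩ := hex y
      exact ⟨j, fun hji => hj (hji ▸ hy), hj⟩
    · rintro ⟨j, hji, hj⟩
      exact (mul_eq_zero.1 (hmul y j i hji)).resolve_left hj
  have hclopen : IsClopen {x | f i x ≠ 0} :=
    ⟨isOpen_compl_iff.1 (hcompl ▸ isOpen_biUnion fun j _ => hopen j), hopen i⟩
  exact Set.eq_univ_iff_forall.1 (hclopen.eq_univ ⟨x₀, hx₀⟩) x

namespace Matrix

variable {n R : Type*} [Fintype n] [DecidableEq n] [CommRing R] [Nontrivial R]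

theorem exists_apply_ne_zero_of_isUnit {A : Matrix n n R} (hA : IsUnit A) (k : n) :
    ∃ i, A k i ≠ 0 := by
  by_contra! h
  exact (isUnit_iff_isUnit_det A |>.1 hA).ne_zero (det_eq_zero_of_row_eq_zero k h)

theorem exists_apply_ne_zero_of_isUnit' {A : Matrix n n R} (hA : IsUnit A) (i : n) :
    ∃ k, A k i ≠ 0 := by
  by_contra! h
  exact (isUnit_iff_isUnit_det A |>.1 hA).ne_zero (det_eq_zero_of_column_eq_zero i h)

theorem exists_perm_apply_ne_zero_iff [NoZeroDivisors R] [TopologicalSpace R] [T1Space R]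
    {X : Type*} [TopologicalSpace X] [PreconnectedSpace X] [Nonempty X]
    {J : X → Matrix n n R} (hcont : ∀ k i, Continuous fun x => J x k i)
    (hunit : ∀ x, IsUnit (J x)) (hrow : ∀ x k i j, i ≠ j → J x k i * J x k j = 0) :
    ∃ σ : Equiv.Perm n, ∀ x k i, J x k i ≠ 0 ↔ i = σ k := by
  obtain ⟨x₀⟩ := ‹Nonempty X›
  choose τ hτ using exists_apply_ne_zero_of_isUnit (hunit x₀)
  have hsupp : ∀ x k i, J x k i ≠ 0 ↔ i = τ k := by
    intro x k i
    have hτx : J x k (τ k) ≠ 0 :=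
      apply_ne_zero_of_pairwise_mul_eq_zero (f := fun i x => J x k i) (hcont k)
        (fun x => exists_apply_ne_zero_of_isUnit (hunit x) k) (fun x => hrow x k) (hτ k) x
    refine ⟨fun hi => ?_, fun hi => hi ▸ hτx⟩
    by_contra hne
    exact hi <| (mul_eq_zero.1 (hrow x k i (τ k) hne)).resolve_right hτx
  have hsurj : Surjective τ := fun i => by
    obtain ⟨k, hk⟩ := exists_apply_ne_zero_of_isUnit' (hunit x₀) i
    exact ⟨k, ((hsupp x₀ k i).1 hk).symm⟩
  exact ⟨Equiv.ofBijective τ (Finite.surjective_iff_bijective.1 hsurj), hsupp⟩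

end Matrix

theorem apply_eq_of_forall_fderiv_apply_eq_zero {𝕜 E F : Type*} [RCLike 𝕜]
    [NormedAddCommGroup E] [NormedSpace 𝕜 E] [NormedAddCommGroup F] [NormedSpace 𝕜 F]
    {f : E → F} (hf : Differentiable 𝕜 f) {z w : E} (h : ∀ p, fderiv 𝕜 f p (w - z) = 0) :
    f z = f w := by
  have hψ : ∀ t : 𝕜, HasDerivAt (fun t => f (z + t • (w - z))) 0 t := fun t => by
    simpa [Function.comp_def, h] using (hf _).hasFDerivAt.comp_hasDerivAt t
      (((hasDerivAt_id t).smul_const (w - z)).const_add z)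
  simpa using is_const_of_deriv_eq_zero (fun t => (hψ t).differentiableAt)
    (fun t => (hψ t).deriv) 0 1

theorem apply_eq_apply_single_of_fderiv_single_eq_zero {ι 𝕜 F : Type*} [Fintype ι]
    [DecidableEq ι] [RCLike 𝕜] [NormedAddCommGroup F] [NormedSpace 𝕜 F]
    {f : (ι → 𝕜) → F} (hf : Differentiable 𝕜 f) {j : ι}
    (hj : ∀ p i, i ≠ j → fderiv 𝕜 f p (Pi.single i 1) = 0) (z : ι → 𝕜) :
    f z = f (Pi.single j (z j)) := by
  refine apply_eq_of_forall_fderiv_apply_eq_zero hf fun p => ?_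
  set v := Pi.single j (z j) - z with hv
  have hvj : v j = 0 := by simp [hv]
  rw [pi_eq_sum_univ' v, map_sum]
  refine Finset.sum_eq_zero fun i _ => ?_
  rw [map_smul]
  by_cases hi : i = j
  · simp [hi, hvj]
  · simp [hj p i hi]

theorem injective_of_deriv_ne_zero {f : ℝ → ℝ} (hf : Continuous f) (hf' : ∀ x, deriv f x ≠ 0) :
    Injective f := by
  intro a b hab
  by_contra hne
  rcases lt_or_gt_of_ne hne with hlt | hlt
  · obtain ⟨c, -, hc⟩ := exists_deriv_eq_zero hlt hf.continuousOn hab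
    exact hf' c hc
  · obtain ⟨c, -, hc⟩ := exists_deriv_eq_zero hlt hf.continuousOn hab.symm
    exact hf' c hc

theorem stmt12_general (n : ℕ)
    (h : (Fin n → ℝ) → (Fin n → ℝ)) (hsmooth : ContDiff ℝ 1 h)
    (J : (Fin n → ℝ) → Matrix (Fin n) (Fin n) ℝ)
    (hJ : ∀ zh k i, J zh k i = fderiv ℝ h zh (Pi.single i 1) k)
    (hJinv : ∀ zh, IsUnit (J zh))
    (hrow : ∀ (zh : Fin n → ℝ) (k i j : Fin n), i ≠ j → J zh k i * J zh k j = 0) :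
    ∃ (σ : Equiv.Perm (Fin n)) (g : Fin n → ℝ → ℝ),
      (∀ k, ContDiff ℝ 1 (g k)) ∧
      (∀ k x, deriv (g k) x ≠ 0) ∧
      (∀ (zh : Fin n → ℝ) (k : Fin n), h zh k = g k (zh (σ k))) ∧
      (∀ k, Function.Injective (g k)) := by
  have hdiff := hsmooth.differentiable one_ne_zero
  have hJcont : ∀ k i, Continuous fun z => J z k i := fun k i => by
    simpa only [hJ, Function.comp_def] using (continuous_apply k).comp
      ((hsmooth.continuous_fderiv one_ne_zero).clm_apply continuous_const)
  obtain ⟨σ, hσ⟩ := Matrix.exists_perm_apply_ne_zero_iff hJcont hJinv hrow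
  have hpartial : ∀ k p i, i ≠ σ k → fderiv ℝ (fun z => h z k) p (Pi.single i 1) = 0 := by
    intro k p i hi
    simpa [fderiv_apply (hdiff p), ← hJ] using (hσ p k i).not.2 hi
  have hderiv : ∀ k x, HasDerivAt (fun x => h (Pi.single (σ k) x) k)
      (J (Pi.single (σ k) x) k (σ k)) x := fun k x => by
    simpa only [hJ, Function.comp_def] using hasDerivAt_pi.1
      ((hdiff _).hasFDerivAt.comp_hasDerivAt x (hasDerivAt_single (σ k) x)) k
  have hderiv_ne : ∀ k x, deriv (fun x => h (Pi.single (σ k) x) k) x ≠ 0 := fun k x => by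
    rw [(hderiv k x).deriv]
    exact (hσ _ k _).2 rfl
  have hcont : ∀ k, ContDiff ℝ 1 fun x => h (Pi.single (σ k) x) k := fun k =>
    contDiff_pi.1 (hsmooth.comp (contDiff_single (F' := fun _ : Fin n => ℝ) 1 (σ k))) k
  refine ⟨σ, fun k x => h (Pi.single (σ k) x) k, hcont, hderiv_ne, fun zh k => ?_,
    fun k => injective_of_deriv_ne_zero (hcont k).continuous (hderiv_ne k)⟩
  exact apply_eq_apply_single_of_fderiv_single_eq_zero (differentiable_pi.1 hdiff k)
    (hpartial k) zh

/-- Global step of Theorems 1–3: a C¹ map `h : ℝⁿ → ℝⁿ` whose Jacobian is everywhere invertible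
with at most one nonzero entry in each row is a permuted componentwise transformation
`h(ẑ)_k = h_k(ẑ_{σ(k)})` with each `h_k : ℝ → ℝ` C¹ with nowhere-vanishing derivative
(in particular injective). -/
theorem stmt12 (n : ℕ) (hn : 1 ≤ n)
    (h : (Fin n → ℝ) → (Fin n → ℝ)) (hsmooth : ContDiff ℝ 1 h)
    (J : (Fin n → ℝ) → Matrix (Fin n) (Fin n) ℝ)
    (hJ : ∀ zh k i, J zh k i = fderiv ℝ h zh (Pi.single i 1) k)
    (hJinv : ∀ zh, IsUnit (J zh))
    (hrow : ∀ (zh : Fin n → ℝ) (k i j : Fin n), i ≠ j → J zh k i * J zh k j = 0) :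
    ∃ (σ : Equiv.Perm (Fin n)) (g : Fin n → ℝ → ℝ),
      (∀ k, ContDiff ℝ 1 (g k)) ∧
      (∀ k x, deriv (g k) x ≠ 0) ∧
      (∀ (zh : Fin n → ℝ) (k : Fin n), h zh k = g k (zh (σ k))) ∧
      (∀ k, Function.Injective (g k)) :=
  stmt12_general n h hsmooth J hJ hJinv hrow
end
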